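/- arXiv:math/0503618 — 4 statements merged into one kernel-verified Lean document; each statement's English description precedes it below -/
import Mathlib

section
/- Let A be a Banach algebra possessing a bounded left approximate identity. Then every right A-module map on A is bounded; that is, if φ : A → A is a linear map satisfying φ(xa) = φ(x)a for all x, a ∈ A, then φ is continuous. -/
/-!
Cohen's factorization argument. Let `R` be the unitization of `A` with the `L¹` norm, fix a
small `θ > 0` and put `r = 1 - θ`. Starting from `b₀ = 0`, choose elements `a_k` of the
approximate identity and put `b_{k+1} = b_k + θ r^k a_k` and `g_k = b_k + r^k`. Then
`g_{k+1} = (r + θ a_k) g_k + θ (b_k - a_k b_k)`, where `r + θ a_k` is invertible with a bound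
independent of `k`; so if `a_k b_k ≈ b_k` and `a_k x ≈ x`, every `g_k` is invertible and the
`g_k⁻¹ x` form a Cauchy sequence. In the limit `x = b c` with `b = lim b_k ∈ A`,
`c = lim g_k⁻¹ x`. This works in any Banach `R`-module on which the approximate identity acts
approximately as the identity; applied to a null sequence `x` in `C₀(ℕ, R)` it gives
`x n = b * c n` with `c n → 0`, whence `φ (x n) = φ b * c n → 0`.
-/

open Filter Topology ZeroAtInfty
open scoped Ring

section Perturbation

variable {R : Type*} [NormedRing R] {g d : R}

theorem norm_inverse_add_sub_inverse_le (hg : IsUnit g) (hgd : IsUnit (g + d)) :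
    ‖(g + d)⁻¹ʳ - g⁻¹ʳ‖ ≤ ‖(g + d)⁻¹ʳ‖ * ‖d‖ * ‖g⁻¹ʳ‖ := by
  rw [Ring.inverse_sub_inverse (iff_of_true hgd hg), sub_add_cancel_left, mul_neg, neg_mul,
    norm_neg]
  exact norm_mul₃_le

variable [HasSummableGeomSeries R]

theorem IsUnit.add_of_norm_inverse_mul_le_half (hg : IsUnit g) (h : ‖g⁻¹ʳ‖ * ‖d‖ ≤ 1 / 2) :
    IsUnit (g + d) := by
  nontriviality R
  obtain ⟨u, rfl⟩ := hg
  have hpos : 0 < ‖(↑u⁻¹ : R)‖ := Units.norm_pos u⁻¹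
  rw [Ring.inverse_unit] at h
  have hd : ‖d‖ < ‖(↑u⁻¹ : R)‖⁻¹ := by
    rw [← one_div, lt_div_iff₀ hpos]
    linarith
  exact (u.add d hd).isUnit

theorem norm_inverse_add_le_of_norm_inverse_mul_le_half (hg : IsUnit g)
    (h : ‖g⁻¹ʳ‖ * ‖d‖ ≤ 1 / 2) : ‖(g + d)⁻¹ʳ‖ ≤ 2 * ‖g⁻¹ʳ‖ := by
  have hdiff := norm_inverse_add_sub_inverse_le hg (hg.add_of_norm_inverse_mul_le_half h)
  have htri := norm_sub_norm_le ((g + d)⁻¹ʳ) (g⁻¹ʳ)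
  nlinarith [norm_nonneg ((g + d)⁻¹ʳ)]

theorem norm_inverse_add_sub_inverse_le_of_norm_inverse_mul_le_half (hg : IsUnit g)
    (h : ‖g⁻¹ʳ‖ * ‖d‖ ≤ 1 / 2) : ‖(g + d)⁻¹ʳ - g⁻¹ʳ‖ ≤ 2 * ‖g⁻¹ʳ‖ ^ 2 * ‖d‖ :=
  calc ‖(g + d)⁻¹ʳ - g⁻¹ʳ‖ ≤ ‖(g + d)⁻¹ʳ‖ * ‖d‖ * ‖g⁻¹ʳ‖ :=
        norm_inverse_add_sub_inverse_le hg (hg.add_of_norm_inverse_mul_le_half h)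
    _ ≤ 2 * ‖g⁻¹ʳ‖ * ‖d‖ * ‖g⁻¹ʳ‖ := by
        gcongr
        exact norm_inverse_add_le_of_norm_inverse_mul_le_half hg h
    _ = 2 * ‖g⁻¹ʳ‖ ^ 2 * ‖d‖ := by ring

theorem isUnit_algebraMap_add_and_norm_inverse_le [NormedAlgebra ℝ R] [NormOneClass R] {r : ℝ}
    (hr : 0 < r) {t : R} (ht : ‖t‖ ≤ r / 2) :
    IsUnit (algebraMap ℝ R r + t) ∧ ‖(algebraMap ℝ R r + t)⁻¹ʳ‖ ≤ 2 / r := by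
  let u : Rˣ := (Units.mk0 r hr.ne').map (algebraMap ℝ R).toMonoidHom
  have hu : (algebraMap ℝ R r)⁻¹ʳ = algebraMap ℝ R r⁻¹ := Ring.inverse_unit u
  have hnorm : ‖(algebraMap ℝ R r)⁻¹ʳ‖ = r⁻¹ := by
    rw [hu, norm_algebraMap', Real.norm_of_nonneg (inv_nonneg.2 hr.le)]
  have hsmall : ‖(algebraMap ℝ R r)⁻¹ʳ‖ * ‖t‖ ≤ 1 / 2 := by
    rw [hnorm]
    calc r⁻¹ * ‖t‖ ≤ r⁻¹ * (r / 2) := by gcongr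
      _ = 1 / 2 := by field_simp
  refine ⟨u.isUnit.add_of_norm_inverse_mul_le_half hsmall, ?_⟩
  calc ‖(algebraMap ℝ R r + t)⁻¹ʳ‖ ≤ 2 * ‖(algebraMap ℝ R r)⁻¹ʳ‖ :=
        norm_inverse_add_le_of_norm_inverse_mul_le_half u.isUnit hsmall
    _ = 2 / r := by rw [hnorm, div_eq_mul_inv]

end Perturbation

namespace Cohen

theorem next_eq {R : Type*} [Ring R] [Algebra ℝ R] {θ r s : ℝ} (hθr : θ + r = 1) (a b : R) :
    b + (θ * s) • a + algebraMap ℝ R (r * s) =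
      (algebraMap ℝ R r + θ • a) * (b + algebraMap ℝ R s) + θ • (b - a * b) := by
  obtain rfl : r = 1 - θ := by linarith
  simp only [Algebra.algebraMap_eq_smul_one, add_mul, mul_add, smul_mul_assoc, mul_smul_comm,
    one_mul, mul_one]
  module

theorem inverse_mul_sub_inverse {R : Type*} [Ring R] [Algebra ℝ R] {θ r : ℝ} (hθr : θ + r = 1)
    {a g : R} (hv : IsUnit (algebraMap ℝ R r + θ • a)) :
    ((algebraMap ℝ R r + θ • a) * g)⁻¹ʳ - g⁻¹ʳ =
      g⁻¹ʳ * (algebraMap ℝ R r + θ • a)⁻¹ʳ * algebraMap ℝ R θ * (1 - a) := by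
  have h1 : algebraMap ℝ R θ * (1 - a) = 1 - (algebraMap ℝ R r + θ • a) := by
    obtain rfl : r = 1 - θ := by linarith
    simp only [Algebra.algebraMap_eq_smul_one, map_sub, smul_mul_assoc, one_mul, mul_sub,
      mul_one, one_smul]
    abel
  rw [Ring.inverse_mul (Or.inl hv), mul_assoc _ _ (1 - a), h1, mul_assoc, mul_sub,
    Ring.inverse_mul_cancel _ hv, mul_one, mul_sub, mul_one]

variable {R X : Type*} [NormedRing R] [NormedAlgebra ℝ R] [NormedAddCommGroup X] [Module R X]
  [IsBoundedSMul R X]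

section Step

variable [NormOneClass R] [HasSummableGeomSeries R]

theorem isUnit_next_and_norm_sub_le {θ r s : ℝ} (hθ : 0 ≤ θ) (hr : 0 < r) (hθr : θ + r = 1)
    {a b : R} (ha : θ * ‖a‖ ≤ r / 2) (hg : IsUnit (b + algebraMap ℝ R s))
    (hsmall : ‖(b + algebraMap ℝ R s)⁻¹ʳ‖ * (2 / r) * (θ * ‖b - a * b‖) ≤ 1 / 2) (x : X) :
    IsUnit (b + (θ * s) • a + algebraMap ℝ R (r * s)) ∧
      ‖(b + (θ * s) • a + algebraMap ℝ R (r * s))⁻¹ʳ • x - (b + algebraMap ℝ R s)⁻¹ʳ • x‖ ≤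
        2 * (‖(b + algebraMap ℝ R s)⁻¹ʳ‖ * (2 / r)) ^ 2 * (θ * ‖b - a * b‖) * ‖x‖ +
          ‖(b + algebraMap ℝ R s)⁻¹ʳ‖ * (2 / r) * θ * ‖x - a • x‖ := by
  set g := b + algebraMap ℝ R s
  set K := ‖g⁻¹ʳ‖ * (2 / r)
  set v := algebraMap ℝ R r + θ • a
  obtain ⟨hv, hv_norm⟩ := isUnit_algebraMap_add_and_norm_inverse_le hr (t := θ • a) (by
    rwa [norm_smul, Real.norm_of_nonneg hθ])
  have hw_norm : ‖(v * g)⁻¹ʳ‖ ≤ K := by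
    rw [Ring.inverse_mul (Or.inl hv)]
    exact (norm_mul_le _ _).trans (mul_le_mul_of_nonneg_left hv_norm (norm_nonneg _))
  set d := θ • (b - a * b)
  have hd : ‖d‖ = θ * ‖b - a * b‖ := by rw [norm_smul, Real.norm_of_nonneg hθ]
  have hwd : ‖(v * g)⁻¹ʳ‖ * ‖d‖ ≤ 1 / 2 := by
    rw [hd]
    exact (mul_le_mul_of_nonneg_right hw_norm (by positivity)).trans hsmall
  rw [next_eq hθr]
  refine ⟨(hv.mul hg).add_of_norm_inverse_mul_le_half hwd, ?_⟩
  have hsplit : (v * g + d)⁻¹ʳ • x - g⁻¹ʳ • x = ((v * g + d)⁻¹ʳ - (v * g)⁻¹ʳ) • x +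
      (g⁻¹ʳ * v⁻¹ʳ * algebraMap ℝ R θ) • (x - a • x) := by
    have h1 : ((v * g)⁻¹ʳ - g⁻¹ʳ) • x = (g⁻¹ʳ * v⁻¹ʳ * algebraMap ℝ R θ) • (x - a • x) := by
      rw [inverse_mul_sub_inverse hθr hv, mul_smul, sub_smul, one_smul]
    rw [← h1, sub_smul, sub_smul]
    abel
  have hθ_norm : ‖g⁻¹ʳ * v⁻¹ʳ * algebraMap ℝ R θ‖ ≤ K * θ := by
    calc _ ≤ ‖(v * g)⁻¹ʳ‖ * ‖algebraMap ℝ R θ‖ := by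
          rw [Ring.inverse_mul (Or.inl hv)]
          exact norm_mul_le _ _
      _ ≤ K * θ := by rw [norm_algebraMap', Real.norm_of_nonneg hθ]; gcongr
  rw [hsplit, ← hd]
  calc _ ≤ ‖(v * g + d)⁻¹ʳ - (v * g)⁻¹ʳ‖ * ‖x‖ +
          ‖g⁻¹ʳ * v⁻¹ʳ * algebraMap ℝ R θ‖ * ‖x - a • x‖ :=
        (norm_add_le _ _).trans (add_le_add (norm_smul_le _ _) (norm_smul_le _ _))
    _ ≤ 2 * K ^ 2 * ‖d‖ * ‖x‖ + K * θ * ‖x - a • x‖ := by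
        gcongr
        exact (norm_inverse_add_sub_inverse_le_of_norm_inverse_mul_le_half (hv.mul hg) hwd).trans
          (by gcongr)

variable {ι : Type*} {l : Filter ι} {e : ι → R} {C θ r : ℝ}

theorem exists_next [l.NeBot] (he : ∀ i, ‖e i‖ ≤ C) (hθ : 0 ≤ θ) (hr : 0 < r)
    (hθr : θ + r = 1) (hθC : θ * C ≤ r / 2) {b : R} (hb : Tendsto (fun i => e i * b) l (𝓝 b))
    {x : X} (hx : Tendsto (fun i => e i • x) l (𝓝 x)) {s : ℝ}
    (hg : IsUnit (b + algebraMap ℝ R s)) {δ : ℝ} (hδ : 0 < δ) :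
    ∃ i, IsUnit (b + (θ * s) • e i + algebraMap ℝ R (r * s)) ∧
      ‖(b + (θ * s) • e i + algebraMap ℝ R (r * s))⁻¹ʳ • x - (b + algebraMap ℝ R s)⁻¹ʳ • x‖ ≤ δ := by
  set K := ‖(b + algebraMap ℝ R s)⁻¹ʳ‖ * (2 / r)
  have hb0 : Tendsto (fun i => θ * ‖b - e i * b‖) l (𝓝 0) := by
    simpa using (((tendsto_const_nhds (x := b)).sub hb).norm).const_mul θ
  have hx0 : Tendsto (fun i => ‖x - e i • x‖) l (𝓝 0) := by
    simpa using ((tendsto_const_nhds (x := x)).sub hx).norm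
  have h1 : ∀ᶠ i in l, K * (θ * ‖b - e i * b‖) ≤ 1 / 2 := by
    have : Tendsto (fun i => K * (θ * ‖b - e i * b‖)) l (𝓝 0) := by simpa using hb0.const_mul K
    exact this.eventually (ge_mem_nhds (by norm_num))
  have h2 : ∀ᶠ i in l,
      2 * K ^ 2 * (θ * ‖b - e i * b‖) * ‖x‖ + K * θ * ‖x - e i • x‖ ≤ δ := by
    have : Tendsto (fun i => 2 * K ^ 2 * (θ * ‖b - e i * b‖) * ‖x‖ + K * θ * ‖x - e i • x‖) l
        (𝓝 0) := by
      simpa using ((hb0.const_mul (2 * K ^ 2)).mul_const ‖x‖).add (hx0.const_mul (K * θ))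
    exact this.eventually (ge_mem_nhds hδ)
  obtain ⟨i, hi1, hi2⟩ := (h1.and h2).exists
  have ha : θ * ‖e i‖ ≤ r / 2 := (mul_le_mul_of_nonneg_left (he i) hθ).trans hθC
  obtain ⟨hunit, hnorm⟩ := isUnit_next_and_norm_sub_le hθ hr hθr ha hg hi1 x
  exact ⟨i, hunit, hnorm.trans hi2⟩

theorem exists_seq [l.NeBot] (J : Submodule ℝ R) (heJ : ∀ i, e i ∈ J)
    (hJe : ∀ y ∈ J, Tendsto (fun i => e i * y) l (𝓝 y)) (he : ∀ i, ‖e i‖ ≤ C) (hθ : 0 ≤ θ)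
    (hr : 0 < r) (hθr : θ + r = 1) (hθC : θ * C ≤ r / 2) {x : X}
    (hx : Tendsto (fun i => e i • x) l (𝓝 x)) :
    ∃ b : ℕ → R, (∀ k, b k ∈ J) ∧ (∀ k, IsUnit (b k + algebraMap ℝ R (r ^ k))) ∧
      (∀ k, dist (b k) (b (k + 1)) ≤ θ * C * r ^ k) ∧
      ∀ k, dist ((b k + algebraMap ℝ R (r ^ k))⁻¹ʳ • x)
        ((b (k + 1) + algebraMap ℝ R (r ^ (k + 1)))⁻¹ʳ • x) ≤ r ^ k := by
  have step : ∀ k (y : R), y ∈ J ∧ IsUnit (y + algebraMap ℝ R (r ^ k)) →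
      ∃ y', (y' ∈ J ∧ IsUnit (y' + algebraMap ℝ R (r ^ (k + 1)))) ∧
        dist y y' ≤ θ * C * r ^ k ∧
        dist ((y + algebraMap ℝ R (r ^ k))⁻¹ʳ • x)
          ((y' + algebraMap ℝ R (r ^ (k + 1)))⁻¹ʳ • x) ≤ r ^ k := by
    rintro k y ⟨hyJ, hy⟩
    obtain ⟨i, hunit, hnorm⟩ := exists_next he hθ hr hθr hθC (hJe y hyJ) hx hy (pow_pos hr k)
    refine ⟨y + (θ * r ^ k) • e i, ⟨J.add_mem hyJ (J.smul_mem _ (heJ i)), ?_⟩, ?_, ?_⟩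
    · rwa [pow_succ']
    · rw [dist_eq_norm, sub_add_cancel_left, norm_neg, norm_smul,
        Real.norm_of_nonneg (by positivity)]
      calc θ * r ^ k * ‖e i‖ ≤ θ * r ^ k * C := by gcongr; exact he i
        _ = θ * C * r ^ k := by ring
    · rwa [dist_comm, dist_eq_norm, pow_succ']
  choose! next hnextJ hnext using step
  let b : ℕ → R := fun k => Nat.rec 0 next k
  have hb : ∀ k, b k ∈ J ∧ IsUnit (b k + algebraMap ℝ R (r ^ k)) := by
    intro k
    induction k with
    | zero => simp [b]
    | succ k ih => exact hnextJ k (b k) ih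
  exact ⟨b, fun k => (hb k).1, fun k => (hb k).2, fun k => (hnext k (b k) (hb k)).1,
    fun k => (hnext k (b k) (hb k)).2⟩

end Step

theorem exists_eq_smul_of_seq [CompleteSpace R] [CompleteSpace X] {J : Submodule ℝ R}
    (hJ : IsClosed (J : Set R)) {r M : ℝ} (hr0 : 0 ≤ r) (hr1 : r < 1)
    {x : X} (b : ℕ → R) (hbJ : ∀ k, b k ∈ J)
    (hunit : ∀ k, IsUnit (b k + algebraMap ℝ R (r ^ k)))
    (hb : ∀ k, dist (b k) (b (k + 1)) ≤ M * r ^ k)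
    (hw : ∀ k, dist ((b k + algebraMap ℝ R (r ^ k))⁻¹ʳ • x)
      ((b (k + 1) + algebraMap ℝ R (r ^ (k + 1)))⁻¹ʳ • x) ≤ r ^ k) :
    ∃ b' ∈ J, ∃ c ∈ closure (Set.range fun z : R => z • x), x = b' • c := by
  set g : ℕ → R := fun k => b k + algebraMap ℝ R (r ^ k)
  obtain ⟨b', hb'⟩ := cauchySeq_tendsto_of_complete (cauchySeq_of_le_geometric r M hr1 hb)
  obtain ⟨c, hc⟩ := cauchySeq_tendsto_of_complete
    (cauchySeq_of_le_geometric r 1 hr1 fun k => (hw k).trans_eq (one_mul _).symm)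
  have hg : Tendsto g atTop (𝓝 b') := by
    simpa [g] using hb'.add (((continuous_algebraMap ℝ R).tendsto 0).comp
      (tendsto_pow_atTop_nhds_zero_of_lt_one hr0 hr1))
  have hgw : ∀ k, g k • (g k)⁻¹ʳ • x = x := fun k => by
    rw [← mul_smul, Ring.mul_inverse_cancel _ (hunit k), one_smul]
  refine ⟨b', hJ.mem_of_tendsto hb' (Eventually.of_forall hbJ), c,
    mem_closure_of_tendsto hc (Eventually.of_forall fun k => ⟨_, rfl⟩), ?_⟩
  have hx : Tendsto (fun k => g k • (g k)⁻¹ʳ • x) atTop (𝓝 x) := by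
    simp only [hgw, tendsto_const_nhds]
  exact tendsto_nhds_unique hx (hg.smul hc)

end Cohen

theorem exists_eq_smul_of_tendsto_smul {R X : Type*} [NormedRing R] [NormedAlgebra ℝ R]
    [NormOneClass R] [CompleteSpace R] [NormedAddCommGroup X] [CompleteSpace X] [Module R X]
    [IsBoundedSMul R X] {ι : Type*} {l : Filter ι} [l.NeBot] {e : ι → R} {C : ℝ}
    (J : Submodule ℝ R) (hJ : IsClosed (J : Set R)) (heJ : ∀ i, e i ∈ J)
    (he : ∀ i, ‖e i‖ ≤ C) (hJe : ∀ y ∈ J, Tendsto (fun i => e i * y) l (𝓝 y)) {x : X}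
    (hx : Tendsto (fun i => e i • x) l (𝓝 x)) :
    ∃ b ∈ J, ∃ c ∈ closure (Set.range fun z : R => z • x), x = b • c := by
  set θ := 1 / (2 * |C| + 2)
  have hθ : 0 < θ := by positivity
  have hθ' : θ * (2 * |C| + 2) = 1 := one_div_mul_cancel (by positivity)
  have hθC : θ * C ≤ (1 - θ) / 2 := by
    nlinarith [mul_le_mul_of_nonneg_left (le_abs_self C) hθ.le]
  obtain ⟨b, hbJ, hunit, hb, hw⟩ :=
    Cohen.exists_seq J heJ hJe he hθ.le (by nlinarith [abs_nonneg C]) (by ring) hθC hx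
  exact Cohen.exists_eq_smul_of_seq hJ (by nlinarith [abs_nonneg C]) (by linarith) b hbJ hunit hb hw

namespace ZeroAtInftyContinuousMap

instance {α β : Type*} [TopologicalSpace α] [PseudoMetricSpace β] [Zero β] :
    ContinuousEvalConst C₀(α, β) α β where
  continuous_eval_const a :=
    (BoundedContinuousFunction.lipschitz_eval_const a).continuous.comp isometry_toBCF.continuous

variable {α R Y : Type*} [TopologicalSpace α] [NormedRing R] [NormedAddCommGroup Y] [Module R Y]
  [IsBoundedSMul R Y]

instance : IsBoundedSMul R C₀(α, Y) :=
  IsBoundedSMul.of_norm_smul_le fun r f => by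
    rw [← norm_toBCF_eq_norm, ← norm_toBCF_eq_norm (f := f)]
    exact norm_smul_le r f.toBCF

theorem tendsto_smul_of_forall_tendsto [DiscreteTopology α] {ι : Type*} {l : Filter ι}
    {e : ι → R} {C : ℝ} (he : ∀ i, ‖e i‖ ≤ C) (f : C₀(α, Y))
    (hf : ∀ a, Tendsto (fun i => e i • f a) l (𝓝 (f a))) :
    Tendsto (fun i => e i • f) l (𝓝 f) := by
  rw [Metric.tendsto_nhds]
  intro ε hε
  set η := ε / 2 / (|C| + 1)
  have hη : 0 < η := by positivity
  have hfin : {a | ¬ ‖f a‖ < η}.Finite := by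
    have hf0 := (zero_at_infty f).norm
    rw [cocompact_eq_cofinite, norm_zero] at hf0
    exact eventually_cofinite.1 (hf0.eventually (gt_mem_nhds hη))
  have hnear : ∀ᶠ i in l, ∀ a ∈ {a | ¬ ‖f a‖ < η}, dist (e i • f a) (f a) < ε / 2 :=
    (eventually_all_finite hfin).2 fun a _ => Metric.tendsto_nhds.1 (hf a) _ (half_pos hε)
  filter_upwards [hnear] with i hi
  rw [← dist_toBCF_eq_dist]
  refine lt_of_le_of_lt ((BoundedContinuousFunction.dist_le (half_pos hε).le).2 fun a => ?_)
    (half_lt_self hε)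
  change dist (e i • f a) (f a) ≤ ε / 2
  by_cases ha : ‖f a‖ < η
  · calc dist (e i • f a) (f a) ≤ ‖e i • f a‖ + ‖f a‖ := dist_le_norm_add_norm _ _
      _ ≤ (|C| + 1) * ‖f a‖ := by
          nlinarith [norm_smul_le (e i) (f a), (he i).trans (le_abs_self C), norm_nonneg (f a)]
      _ ≤ (|C| + 1) * η := by gcongr
      _ = ε / 2 := mul_div_cancel₀ _ (by positivity)
  · exact (hi a ha).le

theorem apply_mem_of_mem_closure_range_smul {J : Set Y} (hJ : IsClosed J)
    (hmul : ∀ z : R, ∀ y ∈ J, z • y ∈ J) {f : C₀(α, Y)} (hf : ∀ a, f a ∈ J) {c : C₀(α, Y)}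
    (hc : c ∈ closure (Set.range fun z : R => z • f)) (a : α) : c a ∈ J := by
  have hclosed : IsClosed {g : C₀(α, Y) | ∀ a, g a ∈ J} := by
    rw [Set.ofPred_forall]
    exact isClosed_iInter fun a => hJ.preimage (continuous_eval_const a)
  refine closure_minimal ?_ hclosed hc a
  rintro _ ⟨z, rfl⟩ a
  exact hmul z _ (hf a)

end ZeroAtInftyContinuousMap

namespace WithLp

variable {A : Type*} [NonUnitalNormedRing A]

instance {𝕜 : Type*} [NormedField 𝕜] [NormedSpace 𝕜 A] [IsScalarTower 𝕜 A A]
    [SMulCommClass 𝕜 A A] : NormOneClass (WithLp 1 (Unitization 𝕜 A)) :=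
  ⟨by simp [unitization_norm_def, show ofLp (1 : WithLp 1 (Unitization 𝕜 A)) = 1 from rfl]⟩

variable [NormedSpace ℂ A] [IsScalarTower ℂ A A] [SMulCommClass ℂ A A]

noncomputable instance : NormedAlgebra ℝ (WithLp 1 (Unitization ℂ A)) where
  norm_smul_le t z := by
    rw [← Complex.coe_smul]
    exact (norm_smul_le _ _).trans (by simp)

noncomputable def unitizationInr : A →ₙₐ[ℂ] WithLp 1 (Unitization ℂ A) :=
  (unitizationAlgEquiv ℂ).symm.toAlgHom.toNonUnitalAlgHom.comp (Unitization.inrNonUnitalAlgHom ℂ A)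

@[simp]
theorem ofLp_unitizationInr (a : A) : ofLp (unitizationInr a) = (a : Unitization ℂ A) := rfl

theorem norm_unitizationInr (a : A) : ‖unitizationInr a‖ = ‖a‖ :=
  unitization_norm_inr a

theorem isometry_unitizationInr : Isometry (unitizationInr (A := A)) :=
  unitization_isometry_inr

noncomputable def unitizationInrRange : Submodule ℝ (WithLp 1 (Unitization ℂ A)) where
  carrier := Set.range unitizationInr
  zero_mem' := ⟨0, map_zero _⟩
  add_mem' := by
    rintro _ _ ⟨a, rfl⟩ ⟨b, rfl⟩
    exact ⟨a + b, map_add _ _ _⟩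
  smul_mem' := by
    rintro t _ ⟨a, rfl⟩
    exact ⟨(t : ℂ) • a, by rw [map_smul, Complex.coe_smul]⟩

theorem mem_unitizationInrRange {z : WithLp 1 (Unitization ℂ A)} :
    z ∈ unitizationInrRange ↔ ∃ a, unitizationInr a = z := Iff.rfl

theorem isClosed_unitizationInrRange [CompleteSpace A] :
    IsClosed (unitizationInrRange (A := A) : Set (WithLp 1 (Unitization ℂ A))) :=
  isometry_unitizationInr.isClosedEmbedding.isClosed_range

theorem mul_mem_unitizationInrRange (z : WithLp 1 (Unitization ℂ A))
    {y : WithLp 1 (Unitization ℂ A)} (hy : y ∈ unitizationInrRange) :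
    z * y ∈ unitizationInrRange := by
  obtain ⟨a, rfl⟩ := hy
  refine ⟨(ofLp z).fst • a + (ofLp z).snd * a, ?_⟩
  apply ofLp_injective 1
  ext <;> simp

end WithLp

open WithLp in
theorem exists_mul_of_tendsto_zero {A : Type*} [NonUnitalNormedRing A] [NormedSpace ℂ A]
    [IsScalarTower ℂ A A] [SMulCommClass ℂ A A] [CompleteSpace A] {ι : Type*} {l : Filter ι}
    [l.NeBot] {e : ι → A} (he_bdd : ∃ C : ℝ, ∀ i, ‖e i‖ ≤ C)
    (he_approx : ∀ a : A, Tendsto (fun i => e i * a) l (𝓝 a)) {x : ℕ → A}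
    (hx : Tendsto x atTop (𝓝 0)) :
    ∃ (b : A) (c : ℕ → A), Tendsto c atTop (𝓝 0) ∧ ∀ n, x n = b * c n := by
  obtain ⟨C, hC⟩ := he_bdd
  have hC' : ∀ i, ‖unitizationInr (e i)‖ ≤ C := fun i => (norm_unitizationInr _).trans_le (hC i)
  have happrox : ∀ y ∈ unitizationInrRange,
      Tendsto (fun i => unitizationInr (e i) * y) l (𝓝 y) := by
    rintro _ ⟨a, rfl⟩
    simpa only [Function.comp_def, map_mul] using
      (isometry_unitizationInr.continuous.tendsto a).comp (he_approx a)
  let xs : C₀(ℕ, WithLp 1 (Unitization ℂ A)) :=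
    ⟨⟨fun n => unitizationInr (x n), continuous_of_discreteTopology⟩, by
      rw [cocompact_eq_atTop]
      simpa [Function.comp_def] using (isometry_unitizationInr.continuous.tendsto 0).comp hx⟩
  have hxs : Tendsto (fun i => unitizationInr (e i) • xs) l (𝓝 xs) :=
    ZeroAtInftyContinuousMap.tendsto_smul_of_forall_tendsto hC' xs
      fun n => happrox _ ⟨x n, rfl⟩
  have hfactor := exists_eq_smul_of_tendsto_smul (l := l) (e := fun i => unitizationInr (e i))
    unitizationInrRange isClosed_unitizationInrRange (fun i => ⟨e i, rfl⟩) hC' happrox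
    (x := xs) hxs
  obtain ⟨b, hb, c, hc, hbc⟩ := hfactor
  have hc_mem := ZeroAtInftyContinuousMap.apply_mem_of_mem_closure_range_smul
    isClosed_unitizationInrRange mul_mem_unitizationInrRange (fun n => ⟨x n, rfl⟩) hc
  choose c₀ hc₀ using fun n => mem_unitizationInrRange.1 (hc_mem n)
  obtain ⟨b₀, rfl⟩ := mem_unitizationInrRange.1 hb
  refine ⟨b₀, c₀, ?_, fun n => isometry_unitizationInr.injective ?_⟩
  · rw [isometry_unitizationInr.isEmbedding.tendsto_nhds_iff, map_zero]
    have hc0 := zero_at_infty c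
    rw [cocompact_eq_atTop] at hc0
    simpa [Function.comp_def, hc₀] using hc0
  · rw [map_mul, hc₀]
    exact DFunLike.congr_fun hbc n

/-- Let `A` be a Banach algebra possessing a bounded left approximate identity
(a bounded net `(e i)` with `e i * a → a` for every `a`).  Then every right `A`-module map
`φ : A → A` (a linear map with `φ (x * a) = φ x * a`) is continuous. -/
theorem module_map_continuous_of_bounded_left_approx_identity
    {A : Type*} [NonUnitalNormedRing A] [NormedSpace ℂ A]
    [IsScalarTower ℂ A A] [SMulCommClass ℂ A A] [CompleteSpace A]
    {ι : Type*} (l : Filter ι) [l.NeBot] (e : ι → A)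
    (he_bdd : ∃ C : ℝ, ∀ i, ‖e i‖ ≤ C)
    (he_approx : ∀ a : A, Filter.Tendsto (fun i => e i * a) l (nhds a))
    (φ : A →ₗ[ℂ] A) (hφ : ∀ x a : A, φ (x * a) = φ x * a) :
    Continuous φ := by
  refine continuous_of_continuousAt_zero φ ?_
  rw [ContinuousAt, map_zero, tendsto_iff_seq_tendsto]
  intro x hx
  obtain ⟨b, c, hc, hbc⟩ := exists_mul_of_tendsto_zero he_bdd he_approx hx
  simpa [Function.comp_def, hbc, hφ] using hc.const_mul (φ b)
end

section
/- Let A be a Banach algebra possessing a bounded left approximate identity, let d : A → A be a derivation, and let δ : A → A be a d-derivation (a linear map with δ(xa) = δ(x)a + x d(a) for all x, a ∈ A). Then δ is bounded if and only if d is bounded. -/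
/-!
`T = δ - d` satisfies `T (x * a) = T x * a`, and such a map is automatically continuous when `A`
has a bounded left approximate identity; hence `δ` and `d` differ by a bounded operator.

By the closed graph theorem it suffices that `T uₖ → 0` whenever `uₖ → 0`. Cohen's factorization
writes such a null sequence as `uₖ = a * wₖ` with `wₖ → 0`, and then `T uₖ = T a * wₖ → 0`.

Cohen's factorization is proved in the `ℓ¹`-unitization `A⁺`. With `t = 1 / (2 (1 + C))`, one
builds units `Bₙ₊₁ = Bₙ - t (1 - t)ⁿ (1 - eᵢ)`, choosing `eᵢ` close enough to a left unit for
`Bₙ⁻¹` and, uniformly in `k`, for `Bₙ⁻¹ uₖ`. This keeps `‖Bₙ⁻¹‖ ≤ 4ⁿ`, and makes `Bₙ` converge to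
some `a ∈ A` and `Bₙ⁻¹ uₖ` converge to some `wₖ`, uniformly in `k`; so `wₖ → 0` and
`uₖ = Bₙ (Bₙ⁻¹ uₖ) → a wₖ`.
-/

open Filter Topology WithLp Unitization

theorem tendstoUniformly_mul_of_tendsto_zero {ι A : Type*} [NonUnitalSeminormedRing A]
    {l : Filter ι} {e : ι → A} {C : ℝ} (hC : ∀ i, ‖e i‖ ≤ C)
    (he : ∀ a, Tendsto (fun i => e i * a) l (𝓝 a)) {v : ℕ → A}
    (hv : Tendsto v atTop (𝓝 0)) :
    TendstoUniformly (fun i k => e i * v k) v l := by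
  rw [Metric.tendstoUniformly_iff]
  intro ε hε
  have hC' : 0 < |C| + 1 := by positivity
  obtain ⟨N, hN⟩ := eventually_atTop.mp <|
    (tendsto_zero_iff_norm_tendsto_zero.mp hv).eventually (gt_mem_nhds (div_pos hε hC'))
  have hhead : ∀ᶠ i in l, ∀ k ∈ Set.Iio N, dist (v k) (e i * v k) < ε :=
    (eventually_all_finite (Set.finite_Iio N)).mpr fun k _ =>
      (he (v k)).eventually (Metric.ball_mem_nhds _ hε) |>.mono fun _ h => by
        rwa [dist_comm]
  filter_upwards [hhead] with i hi k
  rcases lt_or_ge k N with hk | hk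
  · exact hi k hk
  · calc dist (v k) (e i * v k) = ‖e i * v k - v k‖ := by rw [dist_comm, dist_eq_norm]
      _ ≤ ‖e i‖ * ‖v k‖ + ‖v k‖ := (norm_sub_le _ _).trans (by gcongr; exact norm_mul_le _ _)
      _ ≤ (|C| + 1) * ‖v k‖ := by nlinarith [norm_nonneg (v k), hC i, le_abs_self C]
      _ < (|C| + 1) * (ε / (|C| + 1)) := by gcongr; exact hN k hk
      _ = ε := by field_simp

theorem Units.exists_val_eq_sub_of_norm_mul_inv_lt_one {R : Type*} [NormedRing R]
    [HasSummableGeomSeries R] [NormOneClass R] (B : Rˣ) {z : R} (hz : ‖z * B⁻¹‖ < 1) :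
    ∃ B' : Rˣ, (B' : R) = B - z ∧ ‖(↑B'⁻¹ : R)‖ ≤ ‖(↑B⁻¹ : R)‖ * (1 - ‖z * B⁻¹‖)⁻¹ ∧
      (↑B'⁻¹ : R) - B⁻¹ = B'⁻¹ * (z * B⁻¹) := by
  set U := Units.oneSub _ hz
  refine ⟨U * B, by simp [U, sub_mul, mul_assoc], ?_, ?_⟩
  · have hU : ‖(↑U⁻¹ : R)‖ ≤ (1 - ‖z * B⁻¹‖)⁻¹ := by
      simpa [U, Units.oneSub] using tsum_geometric_le_of_norm_lt_one _ hz
    calc ‖((U * B)⁻¹ : Rˣ).val‖ = ‖(↑B⁻¹ : R) * U⁻¹‖ := by simp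
      _ ≤ _ := (norm_mul_le _ _).trans (by gcongr)
  · have : (↑U⁻¹ : R) * (z * B⁻¹) = U⁻¹ - 1 := by
      rw [← sub_sub_cancel 1 (z * B⁻¹), mul_sub, mul_one]
      simp [U]
    simp [mul_inv_rev, mul_assoc, this, mul_sub]

theorem exists_tendsto_zero_of_dist_succ_le {E : Type*} [NormedAddCommGroup E] [CompleteSpace E]
    {y : ℕ → ℕ → E} {C r : ℝ} (hr0 : 0 ≤ r) (hr : r < 1)
    (hy : ∀ n k, dist (y n k) (y (n + 1) k) ≤ C * r ^ n)
    (hy0 : ∀ n, Tendsto (y n) atTop (𝓝 0)) :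
    ∃ w : ℕ → E, Tendsto w atTop (𝓝 0) ∧ ∀ k, Tendsto (fun n => y n k) atTop (𝓝 (w k)) := by
  choose w hw using fun k =>
    cauchySeq_tendsto_of_complete (cauchySeq_of_le_geometric r C hr fun n => hy n k)
  refine ⟨w, ?_, hw⟩
  have hunif : TendstoUniformly y w atTop := by
    rw [Metric.tendstoUniformly_iff]
    intro ε hε
    have hgeom : Tendsto (fun n => C * r ^ n / (1 - r)) atTop (𝓝 0) := by
      simpa using ((tendsto_pow_atTop_nhds_zero_of_lt_one hr0 hr).const_mul C).div_const (1 - r)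
    filter_upwards [hgeom.eventually (gt_mem_nhds hε)] with n hn k
    rw [dist_comm]
    exact (dist_le_of_le_geometric_of_tendsto r C hr (fun m => hy m k) (hw k) n).trans_lt hn
  exact hunif.tendsto_of_eventually_tendsto (.of_forall hy0) tendsto_const_nhds

section L1Unitization

variable {A : Type*} [NonUnitalNormedRing A] [NormedSpace ℝ A]

-- The `ℓ¹` norm makes the unitization a normed ring without further assumptions on `A`.
local notation "A⁺" => WithLp 1 (Unitization ℝ A)

noncomputable abbrev inrL1 (a : A) : A⁺ := toLp 1 (a : Unitization ℝ A)

theorem norm_inrL1 (a : A) : ‖inrL1 a‖ = ‖a‖ := unitization_norm_inr a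

theorem isometry_inrL1 : Isometry (inrL1 : A → A⁺) := unitization_isometry_inr

theorem continuous_fst_ofLp : Continuous (fun x : A⁺ => (ofLp x).fst) :=
  (WithLp.continuous_fst 1 ℝ A).comp (uniformEquiv_unitization_addEquiv_prod ℝ A).continuous

noncomputable def lmulL1 (x : A⁺) (a : A) : A := (ofLp x).fst • a + (ofLp x).snd * a

theorem tendsto_lmulL1_zero (x : A⁺) {u : ℕ → A} (hu : Tendsto u atTop (𝓝 0)) :
    Tendsto (fun k => lmulL1 x (u k)) atTop (𝓝 0) := by
  simpa [lmulL1] using (hu.const_smul (ofLp x).fst).add (hu.const_mul (ofLp x).snd)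

variable [IsScalarTower ℝ A A] [SMulCommClass ℝ A A]

@[simp]
theorem WithLp.unitization_one : ofLp (1 : A⁺) = 1 := rfl

instance : NormOneClass A⁺ where
  norm_one := by simp [unitization_norm_def]

theorem inrL1_mul (a b : A) : inrL1 (a * b) = inrL1 a * inrL1 b := by
  apply ofLp_injective 1; simp

theorem inrL1_sub (a b : A) : inrL1 (a - b) = inrL1 a - inrL1 b := by
  apply ofLp_injective 1; simp

theorem inrL1_lmulL1 (x : A⁺) (a : A) : inrL1 (lmulL1 x a) = x * inrL1 a := by
  apply ofLp_injective 1; ext <;> simp [lmulL1]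

theorem fst_ofLp_inv (x : A⁺ˣ) : (ofLp (↑x⁻¹ : A⁺)).fst = (ofLp (x : A⁺)).fst⁻¹ := by
  refine (eq_inv_of_mul_eq_one_right ?_)
  rw [← fst_mul, ← unitization_mul]; simp

theorem norm_one_sub_inrL1_mul_le (e : A) (x : A⁺) :
    ‖(1 - inrL1 e) * x‖ ≤ ‖(ofLp x).fst‖ * (1 + ‖e‖) + ‖(ofLp x).snd - e * (ofLp x).snd‖ := by
  have hfst : (ofLp ((1 - inrL1 e) * x)).fst = (ofLp x).fst := by simp [sub_eq_add_neg, add_mul]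
  have hsnd : (ofLp ((1 - inrL1 e) * x)).snd
      = ((ofLp x).snd - e * (ofLp x).snd) - (ofLp x).fst • e := by
    simp [sub_eq_add_neg, add_mul, add_assoc]
  have := norm_sub_le ((ofLp x).snd - e * (ofLp x).snd) ((ofLp x).fst • e)
  rw [norm_smul] at this
  rw [unitization_norm_def, hfst, hsnd]
  linarith

section Cohen

variable [CompleteSpace A] {ι : Type*} {l : Filter ι} {e : ι → A} {C t : ℝ}

theorem exists_cohen_step_of_norm_le {e₀ : A} (hC : ‖e₀‖ ≤ C) (ht : 0 < t)
    (htC : t * (1 + C) ≤ 1 / 2) (n : ℕ) (B : A⁺ˣ) (hB : (ofLp (B : A⁺)).fst = (1 - t) ^ n)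
    (hBinv : ‖(↑B⁻¹ : A⁺)‖ ≤ 4 ^ n)
    (he₀B : ‖(1 - inrL1 e₀) * ↑B⁻¹‖ ≤ ‖(ofLp (↑B⁻¹ : A⁺)).fst‖ * (1 + C) + 1 / 4) :
    ∃ B' : A⁺ˣ, (ofLp (B' : A⁺)).fst = (1 - t) ^ (n + 1) ∧
      ‖(↑B'⁻¹ : A⁺)‖ ≤ 4 ^ (n + 1) ∧ ‖(B' : A⁺) - B‖ ≤ (1 - t) ^ n ∧
      ∀ x : A⁺, ‖(1 - inrL1 e₀) * (↑B⁻¹ * x)‖ ≤ 8⁻¹ ^ (n + 1) →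
        ‖((↑B'⁻¹ : A⁺) - ↑B⁻¹) * x‖ ≤ 2⁻¹ ^ (n + 1) := by
  have hC0 : 0 ≤ C := (norm_nonneg _).trans hC
  have ht1 : t ≤ 1 / 2 := by nlinarith
  have hρ : 0 < (1 - t) ^ n := pow_pos (by linarith) n
  have hρ1 : (1 - t) ^ n ≤ 1 := pow_le_one₀ (by linarith) (by linarith)
  set c : ℝ := t * (1 - t) ^ n
  have hc : ‖c‖ = c := Real.norm_of_nonneg (by positivity)
  have hc1 : c ≤ 1 := by nlinarith
  set z : A⁺ := c • (1 - inrL1 e₀)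
  have hz : ‖z * ↑B⁻¹‖ ≤ 3 / 4 := by
    calc ‖z * ↑B⁻¹‖ = c * ‖(1 - inrL1 e₀) * ↑B⁻¹‖ := by rw [smul_mul_assoc, norm_smul, hc]
      _ ≤ c * (((1 - t) ^ n)⁻¹ * (1 + C) + 1 / 4) := by
          rw [fst_ofLp_inv, hB, norm_inv, Real.norm_of_nonneg hρ.le] at he₀B
          gcongr
      _ = t * (1 + C) + c / 4 := by simp only [c]; field_simp
      _ ≤ 3 / 4 := by linarith
  obtain ⟨B', hB'B, hB'inv, hB'sub⟩ :=
    Units.exists_val_eq_sub_of_norm_mul_inv_lt_one B (hz.trans_lt (by norm_num))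
  have hB'inv4 : ‖(↑B'⁻¹ : A⁺)‖ ≤ 4 ^ (n + 1) := by
    have : (1 - ‖z * ↑B⁻¹‖)⁻¹ ≤ 4 := by
      rw [inv_le_comm₀ (by linarith) (by norm_num)]
      linarith
    calc ‖(↑B'⁻¹ : A⁺)‖ ≤ 4 ^ n * 4 :=
          hB'inv.trans (mul_le_mul hBinv this (inv_nonneg.mpr (by linarith)) (by positivity))
      _ = 4 ^ (n + 1) := by ring
  refine ⟨B', ?_, hB'inv4, ?_, fun x hx => ?_⟩
  · rw [hB'B]
    have : (ofLp ((B : A⁺) - z)).fst = (1 - t) ^ n - c := by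
      simp [z, hB, sub_eq_add_neg]
    rw [this]
    ring
  · have : ‖1 - inrL1 e₀‖ ≤ 1 + C := by
      refine (norm_sub_le _ _).trans ?_
      rw [norm_one, norm_inrL1]
      linarith
    calc ‖(B' : A⁺) - B‖ = c * ‖1 - inrL1 e₀‖ := by
          rw [hB'B, sub_sub_cancel_left, norm_neg, norm_smul, hc]
      _ ≤ t * (1 - t) ^ n * (1 + C) := by gcongr
      _ ≤ (1 - t) ^ n := by nlinarith
  · calc ‖((↑B'⁻¹ : A⁺) - ↑B⁻¹) * x‖
          = c * ‖(↑B'⁻¹ : A⁺) * ((1 - inrL1 e₀) * (↑B⁻¹ * x))‖ := by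
          rw [hB'sub, ← hc, ← norm_smul]
          simp only [z, smul_mul_assoc, mul_smul_comm, mul_assoc]
      _ ≤ 1 * (4 ^ (n + 1) * 8⁻¹ ^ (n + 1)) := by
          gcongr
          exact (norm_mul_le _ _).trans (by gcongr)
      _ = 2⁻¹ ^ (n + 1) := by rw [one_mul, ← mul_pow]; norm_num

theorem exists_cohen_step [l.NeBot] (hC : ∀ i, ‖e i‖ ≤ C)
    (he : ∀ a, Tendsto (fun i => e i * a) l (𝓝 a)) (ht : 0 < t) (htC : t * (1 + C) ≤ 1 / 2)
    {u : ℕ → A} (hu : Tendsto u atTop (𝓝 0)) (n : ℕ) (B : A⁺ˣ)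
    (hB : (ofLp (B : A⁺)).fst = (1 - t) ^ n) (hBinv : ‖(↑B⁻¹ : A⁺)‖ ≤ 4 ^ n) :
    ∃ B' : A⁺ˣ, (ofLp (B' : A⁺)).fst = (1 - t) ^ (n + 1) ∧
      ‖(↑B'⁻¹ : A⁺)‖ ≤ 4 ^ (n + 1) ∧ ‖(B' : A⁺) - B‖ ≤ (1 - t) ^ n ∧
      ∀ k, ‖((↑B'⁻¹ : A⁺) - ↑B⁻¹) * inrL1 (u k)‖ ≤ 2⁻¹ ^ (n + 1) := by
  set δ : ℝ := 8⁻¹ ^ (n + 1)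
  have hδ : 0 < δ := by positivity
  have hδ1 : δ ≤ 1 / 4 :=
    (pow_le_pow_of_le_one (by norm_num) (by norm_num) (by omega : 1 ≤ n + 1)).trans (by norm_num)
  set h := (ofLp (↑B⁻¹ : A⁺)).snd
  set v : ℕ → A := fun k => lmulL1 (↑B⁻¹) (u k)
  obtain ⟨i, hih, hiv⟩ : ∃ i, dist (e i * h) h < δ ∧ ∀ k, dist (v k) (e i * v k) < δ :=
    (((he h).eventually (Metric.ball_mem_nhds _ hδ)).and
      (Metric.tendstoUniformly_iff.mp
        (tendstoUniformly_mul_of_tendsto_zero hC he (tendsto_lmulL1_zero _ hu)) δ hδ)).exists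
  have he₀B : ‖(1 - inrL1 (e i)) * ↑B⁻¹‖ ≤ ‖(ofLp (↑B⁻¹ : A⁺)).fst‖ * (1 + C) + 1 / 4 := by
    refine (norm_one_sub_inrL1_mul_le _ _).trans ?_
    rw [← dist_eq_norm, dist_comm]
    gcongr
    · exact hC i
    · exact hih.le.trans hδ1
  obtain ⟨B', hfst, hinv, hsub, hdiff⟩ :=
    exists_cohen_step_of_norm_le (hC i) ht htC n B hB hBinv he₀B
  refine ⟨B', hfst, hinv, hsub, fun k => hdiff _ ?_⟩
  rw [← inrL1_lmulL1, sub_mul, one_mul, ← inrL1_mul, ← inrL1_sub, norm_inrL1, ← dist_eq_norm]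
  exact (hiv k).le

theorem exists_cohen_sequence [l.NeBot] (hC : ∀ i, ‖e i‖ ≤ C)
    (he : ∀ a, Tendsto (fun i => e i * a) l (𝓝 a)) (ht : 0 < t) (htC : t * (1 + C) ≤ 1 / 2)
    {u : ℕ → A} (hu : Tendsto u atTop (𝓝 0)) :
    ∃ B : ℕ → A⁺ˣ, (∀ n, (ofLp (B n : A⁺)).fst = (1 - t) ^ n) ∧
      (∀ n, ‖(B (n + 1) : A⁺) - B n‖ ≤ (1 - t) ^ n) ∧
      ∀ n k, ‖((↑(B (n + 1))⁻¹ : A⁺) - ↑(B n)⁻¹) * inrL1 (u k)‖ ≤ 2⁻¹ ^ (n + 1) := by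
  choose! next hfst hinv hsub hdiff using exists_cohen_step hC he ht htC hu
  let B : ℕ → A⁺ˣ := fun n => Nat.rec (motive := fun _ => A⁺ˣ) 1 next n
  have hB : ∀ n, (ofLp (B n : A⁺)).fst = (1 - t) ^ n ∧ ‖(↑(B n)⁻¹ : A⁺)‖ ≤ 4 ^ n := by
    intro n
    induction n with
    | zero => simp [B]
    | succ n ih => exact ⟨hfst n _ ih.1 ih.2, hinv n _ ih.1 ih.2⟩
  exact ⟨B, fun n => (hB n).1, fun n => hsub n _ (hB n).1 (hB n).2,
    fun n => hdiff n _ (hB n).1 (hB n).2⟩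

theorem exists_eq_mul_of_tendsto_zero [l.NeBot] (hC : ∀ i, ‖e i‖ ≤ C)
    (he : ∀ a, Tendsto (fun i => e i * a) l (𝓝 a)) {u : ℕ → A} (hu : Tendsto u atTop (𝓝 0)) :
    ∃ a : A, ∃ w : ℕ → A, Tendsto w atTop (𝓝 0) ∧ ∀ k, u k = a * w k := by
  have hC0 : 0 ≤ C := (norm_nonneg _).trans (hC l.nonempty_of_neBot.some)
  set t : ℝ := (2 * (1 + C))⁻¹
  have ht : 0 < t := by positivity
  have htC : t * (1 + C) = 1 / 2 := by simp only [t]; field_simp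
  obtain ⟨B, hfst, hsub, hdiff⟩ := exists_cohen_sequence hC he ht htC.le hu
  have hρ : |1 - t| < 1 := abs_lt.mpr ⟨by nlinarith, by linarith⟩
  obtain ⟨b, hb⟩ := cauchySeq_tendsto_of_complete <|
    cauchySeq_of_le_geometric (f := fun n => (B n : A⁺)) (1 - t) 1 (lt_of_abs_lt hρ) fun n => by
      rw [dist_comm, dist_eq_norm, one_mul]; exact hsub n
  have hb_fst : (ofLp b).fst = 0 := by
    refine tendsto_nhds_unique ?_ (tendsto_pow_atTop_nhds_zero_of_abs_lt_one hρ)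
    simp_rw [← hfst]
    exact (continuous_fst_ofLp.tendsto b).comp hb
  set a := (ofLp b).snd
  have hab : inrL1 a = b := by
    apply ofLp_injective 1; ext <;> simp [a, hb_fst]
  set y : ℕ → ℕ → A := fun n k => lmulL1 (↑(B n)⁻¹) (u k)
  have hy : ∀ n k, inrL1 (y n k) = ↑(B n)⁻¹ * inrL1 (u k) := fun n k => inrL1_lmulL1 _ _
  have hy_succ : ∀ n k, dist (y n k) (y (n + 1) k) ≤ 2⁻¹ * 2⁻¹ ^ n := fun n k => by
    rw [dist_comm, dist_eq_norm, ← norm_inrL1, inrL1_sub, hy, hy, ← sub_mul, ← pow_succ']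
    exact hdiff n k
  obtain ⟨w, hw0, hw⟩ := exists_tendsto_zero_of_dist_succ_le (by norm_num) (by norm_num) hy_succ
    fun n => tendsto_lmulL1_zero _ hu
  refine ⟨a, w, hw0, fun k => isometry_inrL1.injective ?_⟩
  have hlim : Tendsto (fun n => (B n : A⁺) * inrL1 (y n k)) atTop (𝓝 (b * inrL1 (w k))) :=
    hb.mul ((isometry_inrL1.continuous.tendsto _).comp (hw k))
  rw [inrL1_mul, hab]
  refine tendsto_nhds_unique ?_ hlim
  simp_rw [hy, ← mul_assoc, Units.mul_inv, one_mul]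
  exact tendsto_const_nhds

theorem LinearMap.continuous_of_map_mul_eq_map_mul [l.NeBot] (hC : ∀ i, ‖e i‖ ≤ C)
    (he : ∀ a, Tendsto (fun i => e i * a) l (𝓝 a)) (T : A →ₗ[ℝ] A)
    (hT : ∀ x a, T (x * a) = T x * a) : Continuous T := by
  refine T.continuous_of_seq_closed_graph fun u x y hu hTu => ?_
  obtain ⟨a, w, hw, huw⟩ := exists_eq_mul_of_tendsto_zero hC he (u := fun k => u k - x)
    (by simpa using hu.sub_const x)
  have hlim : Tendsto (fun k => T (u k - x)) atTop (𝓝 (y - T x)) := by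
    simpa using hTu.sub_const (T x)
  have hzero : Tendsto (fun k => T (u k - x)) atTop (𝓝 0) := by
    simp_rw [huw, hT]
    simpa using hw.const_mul (T a)
  exact sub_eq_zero.mp (tendsto_nhds_unique hlim hzero)

end Cohen

end L1Unitization

/-- Let `A` be a Banach algebra possessing a bounded left approximate identity,
let `d : A → A` be a derivation and let `δ : A → A` be a `d`-derivation
(`δ (x * a) = δ x * a + x * d a`).  Then `δ` is bounded iff `d` is bounded. -/
theorem d_derivation_continuous_iff_of_bounded_left_approx_identity
    {A : Type*} [NonUnitalNormedRing A] [NormedSpace ℂ A]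
    [IsScalarTower ℂ A A] [SMulCommClass ℂ A A] [CompleteSpace A]
    {ι : Type*} (l : Filter ι) [l.NeBot] (e : ι → A)
    (he_bdd : ∃ C : ℝ, ∀ i, ‖e i‖ ≤ C)
    (he_approx : ∀ a : A, Filter.Tendsto (fun i => e i * a) l (nhds a))
    (d : A →ₗ[ℂ] A) (hd : ∀ a b : A, d (a * b) = d a * b + a * d b)
    (δ : A →ₗ[ℂ] A) (hδ : ∀ x a : A, δ (x * a) = δ x * a + x * d a) :
    Continuous δ ↔ Continuous d := by
  obtain ⟨C, hC⟩ := he_bdd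
  have hT : Continuous (δ - d : A → A) :=
    LinearMap.continuous_of_map_mul_eq_map_mul hC he_approx ((δ - d).restrictScalars ℝ)
      fun x a => by
        simp only [LinearMap.restrictScalars_apply, LinearMap.sub_apply, hδ, hd, sub_mul]
        abel
  exact ⟨fun hδc => by simpa using hδc.sub hT, fun hdc => by simpa using hT.add hdc⟩
end

section
/- Let A be a Banach algebra, M a Banach right A-module, d : A → A a bounded derivation, δ : M → M a bounded d-derivation, and let Δ_δ : ℬ(M) → ℬ(M) be defined by Δ_δ(T) = δ∘T − T∘δ. Then the map D^δ on the triangular Banach algebra 𝒯 = [[ℬ(M), M],[0, A]], defined by D^δ([[T, x],[0, a]]) = [[Δ_δ(T), δ(x)],[0, d(a)]], is a bounded derivation on 𝒯. -/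
set_option linter.unusedSectionVars false

section TriangularCore

variable {A : Type*} [NonUnitalNormedRing A] [NormedSpace ℂ A]
  [IsScalarTower ℂ A A] [SMulCommClass ℂ A A] [CompleteSpace A]
variable {M : Type*} [NormedAddCommGroup M] [NormedSpace ℂ M] [CompleteSpace M]

/-- The bounded right `A`-module maps on `M` (with right action `p`), as a subspace of the
bounded operators on `M`.  This is the Banach algebra `ℬ(M)`. -/
def BM (p : M →ₗ[ℂ] A →ₗ[ℂ] M) : Submodule ℂ (M →L[ℂ] M) where
  carrier := {T | ∀ (x : M) (a : A), T (p x a) = p (T x) a}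
  add_mem' := by
    intro T S hT hS x a
    simp [hT x a, hS x a]
  zero_mem' := by intro x a; simp
  smul_mem' := by
    intro c T hT x a
    simp [hT x a]

lemma mem_BM {p : M →ₗ[ℂ] A →ₗ[ℂ] M} {T : M →L[ℂ] M} :
    T ∈ BM p ↔ ∀ (x : M) (a : A), T (p x a) = p (T x) a := Iff.rfl

/-- The underlying space of the triangular Banach algebra
`𝒯 = [[ℬ(M), M], [0, A]]` associated to `M`. -/
abbrev Tri (p : M →ₗ[ℂ] A →ₗ[ℂ] M) := (BM p) × M × A

/-- The multiplication of the triangular Banach algebra: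
`[[T₁,x₁],[0,a₁]] · [[T₂,x₂],[0,a₂]] = [[T₁T₂, T₁ x₂ + x₁ a₂],[0, a₁ a₂]]`. -/
def tmul (p : M →ₗ[ℂ] A →ₗ[ℂ] M) (u v : Tri p) : Tri p :=
  (⟨((u.1 : M →L[ℂ] M)).comp (v.1 : M →L[ℂ] M), by
      intro x a
      simp only [ContinuousLinearMap.comp_apply]
      rw [mem_BM.mp v.1.2 x a, mem_BM.mp u.1.2 ((v.1 : M →L[ℂ] M) x) a]⟩,
   (u.1 : M →L[ℂ] M) v.2.1 + p u.2.1 v.2.2,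
   u.2.2 * v.2.2)

/-- The norm of the triangular Banach algebra: `‖[[T,x],[0,a]]‖ = ‖T‖ + ‖x‖ + ‖a‖`. -/
noncomputable def tnorm (p : M →ₗ[ℂ] A →ₗ[ℂ] M) (u : Tri p) : ℝ :=
  ‖(u.1 : M →L[ℂ] M)‖ + ‖u.2.1‖ + ‖u.2.2‖

end TriangularCore

/-- Let `d` be a bounded derivation on `A` and `δ : M → M` a bounded
`d`-derivation, and let `Δ_δ T = δ ∘ T - T ∘ δ`.  Then the map
`D^δ [[T,x],[0,a]] = [[Δ_δ T, δ x],[0, d a]]` is a well-defined bounded derivation on the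
triangular Banach algebra `𝒯 = [[ℬ(M), M],[0, A]]`. -/
theorem Ddelta_is_bounded_derivation
    {A : Type*} [NonUnitalNormedRing A] [NormedSpace ℂ A]
    [IsScalarTower ℂ A A] [SMulCommClass ℂ A A] [CompleteSpace A]
    {M : Type*} [NormedAddCommGroup M] [NormedSpace ℂ M] [CompleteSpace M]
    (p : M →ₗ[ℂ] A →ₗ[ℂ] M)
    (hp_assoc : ∀ (x : M) (a b : A), p (p x a) b = p x (a * b))
    (hp_norm : ∀ (x : M) (a : A), ‖p x a‖ ≤ ‖x‖ * ‖a‖)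
    (d : A →L[ℂ] A) (hd : ∀ a b : A, d (a * b) = d a * b + a * d b)
    (δ : M →L[ℂ] M) (hδ : ∀ (x : M) (a : A), δ (p x a) = p (δ x) a + p x (d a)) :
    ∃ D : Tri p → Tri p,
      (∀ u : Tri p,
        ((D u).1 : M →L[ℂ] M) = δ.comp (u.1 : M →L[ℂ] M) - ((u.1 : M →L[ℂ] M)).comp δ ∧
        (D u).2.1 = δ u.2.1 ∧ (D u).2.2 = d u.2.2) ∧
      (∀ u v : Tri p, D (u + v) = D u + D v) ∧
      (∀ (c : ℂ) (u : Tri p), D (c • u) = c • D u) ∧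
      (∀ u v : Tri p, D (tmul p u v) = tmul p (D u) v + tmul p u (D v)) ∧
      (∃ C : ℝ, ∀ u : Tri p, tnorm p (D u) ≤ C * tnorm p u) := by
  classical
  have hmem : ∀ T : BM p,
      δ.comp (T : M →L[ℂ] M) - ((T : M →L[ℂ] M)).comp δ ∈ BM p := by
    intro T x a
    have hT := mem_BM.mp T.2
    have e1 : δ ((T : M →L[ℂ] M) (p x a)) = p (δ ((T : M →L[ℂ] M) x)) a
        + p ((T : M →L[ℂ] M) x) (d a) := by rw [hT x a, hδ]
    have e2 : (T : M →L[ℂ] M) (δ (p x a)) = p ((T : M →L[ℂ] M) (δ x)) a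
        + p ((T : M →L[ℂ] M) x) (d a) := by
      rw [hδ, map_add, hT (δ x) a, hT x (d a)]
    simp only [ContinuousLinearMap.sub_apply, ContinuousLinearMap.comp_apply, e1, e2,
      map_sub, LinearMap.sub_apply]
    abel
  set D : Tri p → Tri p := fun u =>
    (⟨δ.comp (u.1 : M →L[ℂ] M) - ((u.1 : M →L[ℂ] M)).comp δ, hmem u.1⟩,
      δ u.2.1, d u.2.2) with hD
  have hD1 : ∀ u : Tri p, ((D u).1 : M →L[ℂ] M)
      = δ.comp (u.1 : M →L[ℂ] M) - ((u.1 : M →L[ℂ] M)).comp δ := fun _ => rfl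
  have hD2 : ∀ u : Tri p, (D u).2.1 = δ u.2.1 := fun _ => rfl
  have hD3 : ∀ u : Tri p, (D u).2.2 = d u.2.2 := fun _ => rfl
  refine ⟨D, fun u => ⟨hD1 u, hD2 u, hD3 u⟩, ?_, ?_, ?_, ?_⟩
  · intro u v
    refine Prod.ext (Subtype.ext ?_) (Prod.ext ?_ ?_)
    · rw [Prod.fst_add, Submodule.coe_add, hD1, hD1, hD1, Prod.fst_add,
        Submodule.coe_add]
      ext x
      simp only [ContinuousLinearMap.sub_apply, ContinuousLinearMap.comp_apply,
        ContinuousLinearMap.add_apply, map_add]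
      abel
    · rw [Prod.snd_add, Prod.fst_add, hD2, hD2, hD2, Prod.snd_add, Prod.fst_add, map_add]
    · rw [Prod.snd_add, Prod.snd_add, hD3, hD3, hD3, Prod.snd_add, Prod.snd_add, map_add]
  · intro c u
    refine Prod.ext (Subtype.ext ?_) (Prod.ext ?_ ?_)
    · rw [Prod.smul_fst, SetLike.val_smul, hD1, hD1, Prod.smul_fst, SetLike.val_smul]
      ext x
      simp only [ContinuousLinearMap.sub_apply, ContinuousLinearMap.comp_apply,
        ContinuousLinearMap.smul_apply, map_smul, smul_sub]
    · rw [Prod.smul_snd, Prod.smul_fst, hD2, hD2, Prod.smul_snd, Prod.smul_fst, map_smul]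
    · rw [Prod.smul_snd, Prod.smul_snd, hD3, hD3, Prod.smul_snd, Prod.smul_snd, map_smul]
  · intro u v
    refine Prod.ext (Subtype.ext ?_) (Prod.ext ?_ ?_)
    · rw [hD1, Prod.fst_add, Submodule.coe_add]
      show δ.comp (((u.1 : M →L[ℂ] M)).comp (v.1 : M →L[ℂ] M)) -
          (((u.1 : M →L[ℂ] M)).comp (v.1 : M →L[ℂ] M)).comp δ =
        (δ.comp (u.1 : M →L[ℂ] M) - ((u.1 : M →L[ℂ] M)).comp δ).comp (v.1 : M →L[ℂ] M) +
        ((u.1 : M →L[ℂ] M)).comp (δ.comp (v.1 : M →L[ℂ] M) - ((v.1 : M →L[ℂ] M)).comp δ)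
      ext x
      simp only [ContinuousLinearMap.sub_apply, ContinuousLinearMap.comp_apply,
        ContinuousLinearMap.add_apply, map_sub]
      abel
    · rw [hD2, Prod.snd_add, Prod.fst_add]
      show δ ((u.1 : M →L[ℂ] M) v.2.1 + p u.2.1 v.2.2) =
        ((δ.comp (u.1 : M →L[ℂ] M) - ((u.1 : M →L[ℂ] M)).comp δ) v.2.1 + p (δ u.2.1) v.2.2)
        + ((u.1 : M →L[ℂ] M) (δ v.2.1) + p u.2.1 (d v.2.2))
      rw [map_add, hδ u.2.1 v.2.2]
      simp only [ContinuousLinearMap.sub_apply, ContinuousLinearMap.comp_apply]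
      abel
    · exact hd u.2.2 v.2.2
  · refine ⟨2 * ‖δ‖ + ‖d‖, fun u => ?_⟩
    have h1 : ‖((D u).1 : M →L[ℂ] M)‖ ≤ 2 * ‖δ‖ * ‖(u.1 : M →L[ℂ] M)‖ := by
      rw [hD1]
      calc _ ≤ ‖δ.comp (u.1 : M →L[ℂ] M)‖ + ‖((u.1 : M →L[ℂ] M)).comp δ‖ := norm_sub_le _ _
        _ ≤ ‖δ‖ * ‖(u.1 : M →L[ℂ] M)‖ + ‖(u.1 : M →L[ℂ] M)‖ * ‖δ‖ :=
            add_le_add (ContinuousLinearMap.opNorm_comp_le _ _)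
              (ContinuousLinearMap.opNorm_comp_le _ _)
        _ = 2 * ‖δ‖ * ‖(u.1 : M →L[ℂ] M)‖ := by ring
    have h2 : ‖(D u).2.1‖ ≤ ‖δ‖ * ‖u.2.1‖ := by rw [hD2]; exact δ.le_opNorm _
    have h3 : ‖(D u).2.2‖ ≤ ‖d‖ * ‖u.2.2‖ := by rw [hD3]; exact d.le_opNorm _
    have hT : (0:ℝ) ≤ ‖(u.1 : M →L[ℂ] M)‖ := norm_nonneg _
    have hx : (0:ℝ) ≤ ‖u.2.1‖ := norm_nonneg _
    have ha : (0:ℝ) ≤ ‖u.2.2‖ := norm_nonneg _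
    have hδn : (0:ℝ) ≤ ‖δ‖ := norm_nonneg _
    have hdn : (0:ℝ) ≤ ‖d‖ := norm_nonneg _
    simp only [tnorm]
    nlinarith
end

section
/- Let A be a unital Banach algebra, M a unital Banach right A-module, and 𝒯 = [[ℬ(M), M],[0, A]] the associated triangular Banach algebra. If D : 𝒯 → 𝒯 is a bounded derivation, then there exist m₀ ∈ M, a bounded derivation d : A → A, and a bounded d-derivation δ : M → M such that D([[T, x],[0, a]]) = [[δ∘T − T∘δ, δ(x) + m₀a − T(m₀)],[0, d(a)]] for all T ∈ ℬ(M), x ∈ M, a ∈ A. -/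
set_option linter.unusedSectionVars false

/-!
Write `Q = [[0,0],[0,1]]`, `m₀` for the `M`-entry of `D Q`, `d a` for the `A`-entry of
`D [[0,0],[0,a]]` and `δ x` for the `M`-entry of `D [[0,x],[0,0]]`; boundedness of `D` makes `d`
and `δ` bounded. Applying the Leibniz rule to the corner products `Q·a = a`, `x·Q = x`,
`Q·x = 0`, `T·Q = 0`, `a·b = ab`, `x·a = xa` and `T·x = T x` and reading off single entries
determines `D` on each of the three corners, and `D` is additive.
-/

noncomputable section

namespace Tri

variable {A : Type*} [NormedRing A] [NormedAlgebra ℂ A] [CompleteSpace A]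
variable {M : Type*} [NormedAddCommGroup M] [NormedSpace ℂ M] [CompleteSpace M]
variable (p : M →ₗ[ℂ] A →ₗ[ℂ] M)

def opCorner : BM p →ₗ[ℂ] Tri p := LinearMap.inl ℂ (BM p) (M × A)

def modCorner : M →ₗ[ℂ] Tri p := LinearMap.inr ℂ (BM p) (M × A) ∘ₗ LinearMap.inl ℂ M A

def algCorner : A →ₗ[ℂ] Tri p := LinearMap.inr ℂ (BM p) (M × A) ∘ₗ LinearMap.inr ℂ M A

lemma opCorner_apply (T : BM p) : opCorner p T = (T, 0, 0) := rfl

lemma modCorner_apply (x : M) : modCorner p x = (0, x, 0) := rfl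

lemma algCorner_apply (a : A) : algCorner p a = (0, 0, a) := rfl

lemma opCorner_add_modCorner_add_algCorner (u : Tri p) :
    opCorner p u.1 + modCorner p u.2.1 + algCorner p u.2.2 = u := by
  ext <;> simp [opCorner_apply, modCorner_apply, algCorner_apply]

@[simp] lemma tmul_fst_coe (u v : Tri p) :
    ((tmul p u v).1 : M →L[ℂ] M) = (u.1 : M →L[ℂ] M).comp (v.1 : M →L[ℂ] M) := rfl

@[simp] lemma tmul_snd_fst (u v : Tri p) :
    (tmul p u v).2.1 = (u.1 : M →L[ℂ] M) v.2.1 + p u.2.1 v.2.2 := rfl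

@[simp] lemma tmul_snd_snd (u v : Tri p) : (tmul p u v).2.2 = u.2.2 * v.2.2 := rfl

lemma tmul_algCorner_algCorner (a b : A) :
    tmul p (algCorner p a) (algCorner p b) = algCorner p (a * b) := by
  ext <;> simp [algCorner_apply]

lemma tmul_modCorner_algCorner (x : M) (a : A) :
    tmul p (modCorner p x) (algCorner p a) = modCorner p (p x a) := by
  ext <;> simp [modCorner_apply, algCorner_apply]

lemma tmul_opCorner_modCorner (T : BM p) (x : M) :
    tmul p (opCorner p T) (modCorner p x) = modCorner p ((T : M →L[ℂ] M) x) := by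
  ext <;> simp [opCorner_apply, modCorner_apply]

lemma tmul_algCorner_modCorner (a : A) (x : M) :
    tmul p (algCorner p a) (modCorner p x) = 0 := by
  ext <;> simp [modCorner_apply, algCorner_apply]

lemma tmul_opCorner_algCorner (T : BM p) (a : A) :
    tmul p (opCorner p T) (algCorner p a) = 0 := by
  ext <;> simp [opCorner_apply, algCorner_apply]

section Derivation

variable {p} {D : Tri p →ₗ[ℂ] Tri p}
  (hD : ∀ u v : Tri p, D (tmul p u v) = tmul p (D u) v + tmul p u (D v))
include hD

lemma fst_coe_apply_tmul (u v : Tri p) :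
    ((D (tmul p u v)).1 : M →L[ℂ] M) =
      ((D u).1 : M →L[ℂ] M).comp (v.1 : M →L[ℂ] M) +
        (u.1 : M →L[ℂ] M).comp ((D v).1 : M →L[ℂ] M) := by
  rw [hD]; rfl

lemma snd_fst_apply_tmul (u v : Tri p) :
    (D (tmul p u v)).2.1 =
      (D u).1.1 v.2.1 + p (D u).2.1 v.2.2 + (u.1.1 (D v).2.1 + p u.2.1 (D v).2.2) := by
  rw [hD]; rfl

lemma snd_snd_apply_tmul (u v : Tri p) :
    (D (tmul p u v)).2.2 = (D u).2.2 * v.2.2 + u.2.2 * (D v).2.2 := by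
  rw [hD]; rfl

lemma fst_apply_algCorner (a : A) : (D (algCorner p a)).1 = 0 := by
  have h := fst_coe_apply_tmul hD (algCorner p 1) (algCorner p a)
  rw [tmul_algCorner_algCorner, one_mul] at h
  ext1; simpa [algCorner_apply] using h

lemma snd_fst_apply_algCorner (a : A) :
    (D (algCorner p a)).2.1 = p (D (algCorner p 1)).2.1 a := by
  have h := snd_fst_apply_tmul hD (algCorner p 1) (algCorner p a)
  rw [tmul_algCorner_algCorner, one_mul] at h
  simpa [algCorner_apply] using h

lemma snd_snd_apply_algCorner_mul (a b : A) :
    (D (algCorner p (a * b))).2.2 =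
      (D (algCorner p a)).2.2 * b + a * (D (algCorner p b)).2.2 := by
  have h := snd_snd_apply_tmul hD (algCorner p a) (algCorner p b)
  rw [tmul_algCorner_algCorner] at h
  simpa [algCorner_apply] using h

lemma fst_apply_modCorner (hp_one : ∀ x : M, p x 1 = x) (x : M) :
    (D (modCorner p x)).1 = 0 := by
  have h := fst_coe_apply_tmul hD (modCorner p x) (algCorner p 1)
  rw [tmul_modCorner_algCorner, hp_one] at h
  ext1; simpa [modCorner_apply, algCorner_apply] using h

lemma snd_snd_apply_modCorner (x : M) : (D (modCorner p x)).2.2 = 0 := by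
  have h := snd_snd_apply_tmul hD (algCorner p 1) (modCorner p x)
  rw [tmul_algCorner_modCorner, map_zero] at h
  simpa [algCorner_apply, modCorner_apply] using h.symm

lemma snd_fst_apply_modCorner_smul (x : M) (a : A) :
    (D (modCorner p (p x a))).2.1 =
      p (D (modCorner p x)).2.1 a + p x (D (algCorner p a)).2.2 := by
  have h := snd_fst_apply_tmul hD (modCorner p x) (algCorner p a)
  rw [tmul_modCorner_algCorner] at h
  simpa [algCorner_apply, modCorner_apply] using h

lemma snd_fst_apply_opCorner (hp_one : ∀ x : M, p x 1 = x) (T : BM p) :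
    (D (opCorner p T)).2.1 = -(T : M →L[ℂ] M) (D (algCorner p 1)).2.1 := by
  have h := snd_fst_apply_tmul hD (opCorner p T) (algCorner p 1)
  rw [tmul_opCorner_algCorner, map_zero] at h
  simpa [opCorner_apply, algCorner_apply, hp_one, eq_neg_iff_add_eq_zero] using h.symm

lemma snd_snd_apply_opCorner (T : BM p) : (D (opCorner p T)).2.2 = 0 := by
  have h := snd_snd_apply_tmul hD (opCorner p T) (algCorner p 1)
  rw [tmul_opCorner_algCorner, map_zero] at h
  simpa [opCorner_apply, algCorner_apply] using h.symm

lemma fst_apply_opCorner_apply (T : BM p) (x : M) :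
    (D (opCorner p T)).1.1 x =
      (D (modCorner p ((T : M →L[ℂ] M) x))).2.1 - (T : M →L[ℂ] M) (D (modCorner p x)).2.1 := by
  have h := snd_fst_apply_tmul hD (opCorner p T) (modCorner p x)
  rw [tmul_opCorner_modCorner] at h
  simp only [modCorner_apply, opCorner_apply, map_zero, add_zero, LinearMap.zero_apply] at h
  simp only [opCorner_apply, modCorner_apply, h, add_sub_cancel_right]

end Derivation

section Bounded

variable (D : Tri p →ₗ[ℂ] Tri p)

def algPart : A →ₗ[ℂ] A :=
  LinearMap.snd ℂ M A ∘ₗ LinearMap.snd ℂ (BM p) (M × A) ∘ₗ D ∘ₗ algCorner p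

def modPart : M →ₗ[ℂ] M :=
  LinearMap.fst ℂ M A ∘ₗ LinearMap.snd ℂ (BM p) (M × A) ∘ₗ D ∘ₗ modCorner p

lemma algPart_apply (a : A) : algPart p D a = (D (algCorner p a)).2.2 := rfl

lemma modPart_apply (x : M) : modPart p D x = (D (modCorner p x)).2.1 := rfl

lemma norm_snd_fst_le_tnorm (u : Tri p) : ‖u.2.1‖ ≤ tnorm p u := by
  unfold tnorm
  linarith [norm_nonneg (u.1 : M →L[ℂ] M), norm_nonneg u.2.2]

lemma norm_snd_snd_le_tnorm (u : Tri p) : ‖u.2.2‖ ≤ tnorm p u := by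
  unfold tnorm
  linarith [norm_nonneg (u.1 : M →L[ℂ] M), norm_nonneg u.2.1]

lemma tnorm_algCorner (a : A) : tnorm p (algCorner p a) = ‖a‖ := by
  simp [tnorm, algCorner_apply]

lemma tnorm_modCorner (x : M) : tnorm p (modCorner p x) = ‖x‖ := by
  simp [tnorm, modCorner_apply]

variable {p D} {C : ℝ} (hC : ∀ u : Tri p, tnorm p (D u) ≤ C * tnorm p u)
include hC

lemma norm_algPart_le (a : A) : ‖algPart p D a‖ ≤ C * ‖a‖ :=
  calc ‖algPart p D a‖ ≤ tnorm p (D (algCorner p a)) := norm_snd_snd_le_tnorm p _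
    _ ≤ C * ‖a‖ := tnorm_algCorner p a ▸ hC _

lemma norm_modPart_le (x : M) : ‖modPart p D x‖ ≤ C * ‖x‖ :=
  calc ‖modPart p D x‖ ≤ tnorm p (D (modCorner p x)) := norm_snd_fst_le_tnorm p _
    _ ≤ C * ‖x‖ := tnorm_modCorner p x ▸ hC _

end Bounded

lemma map_eq_add_corners (D : Tri p →ₗ[ℂ] Tri p) (u : Tri p) :
    D u = D (opCorner p u.1) + D (modCorner p u.2.1) + D (algCorner p u.2.2) := by
  rw [← map_add, ← map_add, opCorner_add_modCorner_add_algCorner]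

end Tri

end

open Tri in
theorem bounded_derivation_on_triangular_algebra_structure_general
    {A : Type*} [NormedRing A] [NormedAlgebra ℂ A] [CompleteSpace A]
    {M : Type*} [NormedAddCommGroup M] [NormedSpace ℂ M] [CompleteSpace M]
    (p : M →ₗ[ℂ] A →ₗ[ℂ] M)
    (hp_one : ∀ x : M, p x 1 = x)
    (D : Tri p →ₗ[ℂ] Tri p)
    (hD_der : ∀ u v : Tri p, D (tmul p u v) = tmul p (D u) v + tmul p u (D v))
    (hD_bdd : ∃ C : ℝ, ∀ u : Tri p, tnorm p (D u) ≤ C * tnorm p u) :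
    ∃ (m₀ : M) (d : A →L[ℂ] A) (δ : M →L[ℂ] M),
      (∀ a b : A, d (a * b) = d a * b + a * d b) ∧
      (∀ (x : M) (a : A), δ (p x a) = p (δ x) a + p x (d a)) ∧
      ∀ u : Tri p,
        ((D u).1 : M →L[ℂ] M) = δ.comp (u.1 : M →L[ℂ] M) - ((u.1 : M →L[ℂ] M)).comp δ ∧
        (D u).2.1 = δ u.2.1 + p m₀ u.2.2 - (u.1 : M →L[ℂ] M) m₀ ∧
        (D u).2.2 = d u.2.2 := by
  obtain ⟨C, hC⟩ := hD_bdd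
  refine ⟨(D (algCorner p 1)).2.1, (algPart p D).mkContinuous C (norm_algPart_le hC),
    (modPart p D).mkContinuous C (norm_modPart_le hC), snd_snd_apply_algCorner_mul hD_der,
    snd_fst_apply_modCorner_smul hD_der, fun u => ⟨?_, ?_, ?_⟩⟩ <;>
    rw [map_eq_add_corners p D u]
  · ext x
    simp [fst_apply_opCorner_apply hD_der, fst_apply_modCorner hD_der hp_one,
      fst_apply_algCorner hD_der, modPart_apply]
  · rw [Prod.snd_add, Prod.snd_add, Prod.fst_add, Prod.fst_add,
      snd_fst_apply_opCorner hD_der hp_one, snd_fst_apply_algCorner hD_der u.2.2]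
    simp only [LinearMap.mkContinuous_apply, modPart_apply]
    abel
  · simp [snd_snd_apply_opCorner hD_der, snd_snd_apply_modCorner hD_der, algPart_apply]

/-- Let `A` be a unital Banach algebra, `M` a unital Banach right `A`-module
and `𝒯 = [[ℬ(M), M],[0, A]]` the associated triangular Banach algebra.  If `D : 𝒯 → 𝒯` is a
bounded derivation, then there exist `m₀ ∈ M`, a bounded derivation `d : A → A` and a bounded
`d`-derivation `δ : M → M` such that
`D [[T,x],[0,a]] = [[δ∘T - T∘δ, δ x + m₀ a - T m₀],[0, d a]]`. -/
theorem bounded_derivation_on_triangular_algebra_structure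
    {A : Type*} [NormedRing A] [NormedAlgebra ℂ A] [CompleteSpace A]
    {M : Type*} [NormedAddCommGroup M] [NormedSpace ℂ M] [CompleteSpace M]
    (p : M →ₗ[ℂ] A →ₗ[ℂ] M)
    (hp_assoc : ∀ (x : M) (a b : A), p (p x a) b = p x (a * b))
    (hp_norm : ∀ (x : M) (a : A), ‖p x a‖ ≤ ‖x‖ * ‖a‖)
    (hp_one : ∀ x : M, p x 1 = x)
    (D : Tri p →ₗ[ℂ] Tri p)
    (hD_der : ∀ u v : Tri p, D (tmul p u v) = tmul p (D u) v + tmul p u (D v))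
    (hD_bdd : ∃ C : ℝ, ∀ u : Tri p, tnorm p (D u) ≤ C * tnorm p u) :
    ∃ (m₀ : M) (d : A →L[ℂ] A) (δ : M →L[ℂ] M),
      (∀ a b : A, d (a * b) = d a * b + a * d b) ∧
      (∀ (x : M) (a : A), δ (p x a) = p (δ x) a + p x (d a)) ∧
      ∀ u : Tri p,
        ((D u).1 : M →L[ℂ] M) = δ.comp (u.1 : M →L[ℂ] M) - ((u.1 : M →L[ℂ] M)).comp δ ∧
        (D u).2.1 = δ u.2.1 + p m₀ u.2.2 - (u.1 : M →L[ℂ] M) m₀ ∧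
        (D u).2.2 = d u.2.2 :=
  bounded_derivation_on_triangular_algebra_structure_general p hp_one D hD_der hD_bdd
end
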